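/- arXiv:1707.02404 — 4 statements merged into one kernel-verified Lean document; each statement's English description precedes it below -/
import Mathlib

section
/- Let γ generate F_{q^3} over F_q and let T = { c(γ+a)/(γ+b) : a, b ∈ F_q, c ∈ F_q* }. Then the cardinality of T (as a set, without multiplicities) is (q-1)(q^2-q+1). -/
/-!
Since `γ` has degree `3`, evaluation at `γ` is injective on polynomials of degree at most `2`.
Hence `c(γ+a)/(γ+b) = c'(γ+a')/(γ+b')` holds iff `c(X+a)(X+b') = c'(X+a')(X+b)` in `F[X]`, i.e. iff
`c = c'` and either `a = b`, `a' = b'` (both values are `c`) or `(a, b) = (a', b')`. So `T` is in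
bijection with the triples having `c ≠ 0` and either `a ≠ b` or `a = b = 0`; there are
`(q² - q + 1)(q - 1)` of them.
-/

open Polynomial Finset

theorem Polynomial.C_mul_X_add_C_mul_X_add_C_eq_iff {R : Type*} [CommRing R] [IsDomain R]
    {a b c a' b' c' : R} (hc : c ≠ 0) :
    C c * ((X + C a) * (X + C b')) = C c' * ((X + C a') * (X + C b)) ↔
      c = c' ∧ (a = b ∧ a' = b' ∨ a = a' ∧ b = b') := by
  refine ⟨fun h ↦ ?_, ?_⟩
  · have hcc' : c = c' := by
      simpa [((monic_X_add_C a).mul (monic_X_add_C b')).leadingCoeff,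
        ((monic_X_add_C a').mul (monic_X_add_C b)).leadingCoeff] using congrArg leadingCoeff h
    subst hcc'
    have h := mul_left_cancel₀ (C_ne_zero.mpr hc) h
    refine ⟨rfl, ?_⟩
    by_cases hab : a = b
    · subst hab
      rw [mul_comm (X + C a')] at h
      have := mul_left_cancel₀ (X_add_C_ne_zero a) h
      exact Or.inl ⟨rfl, (C_injective (add_left_cancel this)).symm⟩
    · -- evaluating at `-b` kills the right-hand side
      have hb : (a - b) * (b' - b) = 0 := by
        simpa [sub_eq_neg_add, add_comm] using congrArg (eval (-b)) h
      have hbb' : b = b' :=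
        (sub_eq_zero.mp ((mul_eq_zero.mp hb).resolve_left (sub_ne_zero.mpr hab))).symm
      subst hbb'
      have := mul_right_cancel₀ (X_add_C_ne_zero b) h
      exact Or.inr ⟨C_injective (add_left_cancel this), rfl⟩
  · rintro ⟨rfl, ⟨rfl, rfl⟩ | ⟨rfl, rfl⟩⟩ <;> ring

section Minpoly

variable {F E : Type*} [Field F] [Field E] [Algebra F E]

theorem natDegree_minpoly_eq_finrank_of_adjoin_eq_top [FiniteDimensional F E] {γ : E}
    (hγ : Algebra.adjoin F {γ} = ⊤) : (minpoly F γ).natDegree = Module.finrank F E := by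
  rw [← IntermediateField.adjoin.finrank (IsIntegral.of_finite F γ),
    IntermediateField.adjoin_eq_top_of_algebra F {γ} hγ, IntermediateField.finrank_top']

theorem injOn_aeval_natDegree_lt_minpoly (γ : E) :
    Set.InjOn (aeval γ : F[X] → E) {p | p.natDegree < (minpoly F γ).natDegree} := by
  intro p hp r hr h
  by_contra hpr
  have hle := natDegree_le_natDegree <|
    minpoly.degree_le_of_ne_zero F γ (sub_ne_zero.mpr hpr) (by rw [map_sub, h, sub_self])
  have := (natDegree_sub_le p r).trans_lt (max_lt hp hr)
  omega

theorem add_algebraMap_ne_zero {γ : E} (hγ : 1 < (minpoly F γ).natDegree) (b : F) :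
    γ + algebraMap F E b ≠ 0 := by
  intro h
  have := injOn_aeval_natDegree_lt_minpoly (F := F) γ
    (show (X + C b).natDegree < _ by rwa [natDegree_X_add_C])
    (show (0 : F[X]).natDegree < _ by rw [natDegree_zero]; omega) (by simpa using h)
  exact X_add_C_ne_zero b this

end Minpoly

section ScaledRatio

variable {F E : Type*} [Field F] [Field E] [Algebra F E]

def scaledRatio (γ : E) (a b c : F) : E :=
  algebraMap F E c * (γ + algebraMap F E a) / (γ + algebraMap F E b)

theorem scaledRatio_eq_scaledRatio_iff {γ : E} (hγ : 2 < (minpoly F γ).natDegree)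
    {a b c a' b' c' : F} (hc : c ≠ 0) :
    scaledRatio γ a b c = scaledRatio γ a' b' c' ↔
      c = c' ∧ (a = b ∧ a' = b' ∨ a = a' ∧ b = b') := by
  have aeval_quadratic (a b c : F) : aeval γ (C c * ((X + C a) * (X + C b))) =
      algebraMap F E c * (γ + algebraMap F E a) * (γ + algebraMap F E b) := by
    simp [mul_assoc]
  have natDegree_quadratic (a b c : F) :
      (C c * ((X + C a) * (X + C b))).natDegree < (minpoly F γ).natDegree := by
    refine lt_of_le_of_lt ?_ hγ
    compute_degree
  rw [scaledRatio, scaledRatio, div_eq_div_iff (add_algebraMap_ne_zero (by omega) b)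
    (add_algebraMap_ne_zero (by omega) b'), ← aeval_quadratic, ← aeval_quadratic,
    (injOn_aeval_natDegree_lt_minpoly γ).eq_iff (natDegree_quadratic ..) (natDegree_quadratic ..),
    C_mul_X_add_C_mul_X_add_C_eq_iff hc]

variable [Fintype F] [DecidableEq F]

variable (F) in
def scaledRatioParams : Finset ((F × F) × F) :=
  (univ.offDiag ∪ {(0, 0)}) ×ˢ univ.erase 0

theorem mem_scaledRatioParams {a b c : F} :
    ((a, b), c) ∈ scaledRatioParams F ↔ (a ≠ b ∨ a = 0 ∧ b = 0) ∧ c ≠ 0 := by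
  simp [scaledRatioParams, or_comm]

variable (F) in
theorem card_scaledRatioParams :
    #(scaledRatioParams F) =
      (Fintype.card F * Fintype.card F - Fintype.card F + 1) * (Fintype.card F - 1) := by
  rw [scaledRatioParams, card_product, card_union_of_disjoint (by simp), offDiag_card,
    card_singleton, card_erase_of_mem (mem_univ 0), card_univ]

theorem setOf_scaledRatio_eq_image {γ : E} (hγ : 2 < (minpoly F γ).natDegree) :
    {x : E | ∃ a b c : F, c ≠ 0 ∧ x = scaledRatio γ a b c} =
      (fun p : (F × F) × F ↦ scaledRatio γ p.1.1 p.1.2 p.2) '' ↑(scaledRatioParams F) := by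
  ext x
  constructor
  · rintro ⟨a, b, c, hc, rfl⟩
    by_cases hab : a = b
    · refine ⟨((0, 0), c), mem_scaledRatioParams.mpr ⟨Or.inr ⟨rfl, rfl⟩, hc⟩, ?_⟩
      exact ((scaledRatio_eq_scaledRatio_iff hγ hc).mpr ⟨rfl, Or.inl ⟨hab, rfl⟩⟩).symm
    · exact ⟨((a, b), c), mem_scaledRatioParams.mpr ⟨Or.inl hab, hc⟩, rfl⟩
  · rintro ⟨⟨⟨a, b⟩, c⟩, hp, rfl⟩
    exact ⟨a, b, c, (mem_scaledRatioParams.mp hp).2, rfl⟩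

theorem injOn_scaledRatio {γ : E} (hγ : 2 < (minpoly F γ).natDegree) :
    Set.InjOn (fun p : (F × F) × F ↦ scaledRatio γ p.1.1 p.1.2 p.2)
      ↑(scaledRatioParams F) := by
  rintro ⟨⟨a, b⟩, c⟩ hp ⟨⟨a', b'⟩, c'⟩ hp' h
  rw [Finset.mem_coe, mem_scaledRatioParams] at hp hp'
  obtain ⟨rfl, ⟨hab, hab'⟩ | ⟨rfl, rfl⟩⟩ := (scaledRatio_eq_scaledRatio_iff hγ hp.2).mp h
  · grind
  · rfl

theorem ncard_setOf_scaledRatio {γ : E} (hγ : 2 < (minpoly F γ).natDegree) :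
    {x : E | ∃ a b c : F, c ≠ 0 ∧ x = scaledRatio γ a b c}.ncard = #(scaledRatioParams F) := by
  rw [setOf_scaledRatio_eq_image hγ, (injOn_scaledRatio hγ).ncard_image, Set.ncard_coe_finset]

end ScaledRatio

theorem card_T_cubic_general
    (q : ℕ) (F E : Type*) [Field F] [Field E] [Algebra F E]
    [Fintype F]
    (hq : Fintype.card F = q)
    (hdeg : Module.finrank F E = 3)
    (γ : E) (hγ : Algebra.adjoin F {γ} = ⊤) :
    Set.ncard {x : E | ∃ a b c : F, c ≠ 0 ∧
        x = algebraMap F E c * (γ + algebraMap F E a) / (γ + algebraMap F E b)}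
      = (q - 1) * (q ^ 2 - q + 1) := by
  classical
  have : FiniteDimensional F E := Module.finite_of_finrank_eq_succ hdeg
  have hγ3 : 2 < (minpoly F γ).natDegree := by
    rw [natDegree_minpoly_eq_finrank_of_adjoin_eq_top hγ, hdeg]; norm_num
  calc _ = #(scaledRatioParams F) := ncard_setOf_scaledRatio hγ3
    _ = (q - 1) * (q ^ 2 - q + 1) := by rw [card_scaledRatioParams, hq, mul_comm, sq]

/-- The set `T = { c(γ+a)/(γ+b) : a, b ∈ F, c ∈ Fˣ }` in a cubic extension
`E` of `F` (with `|F| = q`) has exactly `(q-1)(q^2-q+1)` elements. -/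
theorem card_T_cubic
    (q : ℕ) (F E : Type*) [Field F] [Field E] [Algebra F E]
    [Fintype F] [Fintype E]
    (hq : Fintype.card F = q)
    (hdeg : Module.finrank F E = 3)
    (γ : E) (hγ : Algebra.adjoin F {γ} = ⊤) :
    Set.ncard {x : E | ∃ a b c : F, c ≠ 0 ∧
        x = algebraMap F E c * (γ + algebraMap F E a) / (γ + algebraMap F E b)}
      = (q - 1) * (q ^ 2 - q + 1) :=
  card_T_cubic_general q F E hq hdeg γ hγ
end

section
/- Let γ generate F_{q^3} over F_q and define U₁ = { u(γ+v) : u ∈ F_q*, v ∈ F_q } and U₋₁ = { 1/(u(γ+v)) : u ∈ F_q*, v ∈ F_q }. Then U₁ and U₋₁ are disjoint sets, each of cardinality q(q-1). -/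
/-!
Since `γ` is not in `F`, comparing coefficients of `1, γ` shows that `(u, v) ↦ u(γ + v)` is
injective on `Fˣ × F`, so `U₁` has `q(q - 1)` elements, and so does its image `U₋₁` under
inversion. If `u(γ + v) = (u'(γ + v'))⁻¹`, multiplying out gives an `F`-linear relation among
`1, γ, γ²` with leading coefficient `uu' ≠ 0`, impossible as the minimal polynomial of `γ` has
degree `[E : F] = 3`.
-/

open Pointwise

section AffineOrbit

variable (F : Type*) {E : Type*} [Field F] [Field E] [Algebra F E]

def affineOrbit (γ : E) : Set E :=
  Set.range fun p : Fˣ × F => algebraMap F E p.1 * (γ + algebraMap F E p.2)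

variable {F} {γ : E}

theorem mem_affineOrbit {x : E} :
    x ∈ affineOrbit F γ ↔ ∃ u v : F, u ≠ 0 ∧ x = algebraMap F E u * (γ + algebraMap F E v) := by
  constructor
  · rintro ⟨⟨u, v⟩, rfl⟩
    exact ⟨u, v, u.ne_zero, rfl⟩
  · rintro ⟨u, v, hu, rfl⟩
    exact ⟨(Units.mk0 u hu, v), rfl⟩

theorem mem_inv_affineOrbit {x : E} :
    x ∈ (affineOrbit F γ)⁻¹ ↔
      ∃ u v : F, u ≠ 0 ∧ x = (algebraMap F E u * (γ + algebraMap F E v))⁻¹ := by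
  simp only [Set.mem_inv, mem_affineOrbit, inv_eq_iff_eq_inv]

theorem zero_notMem_affineOrbit (hγ : γ ∉ Set.range (algebraMap F E)) :
    0 ∉ affineOrbit F γ := by
  rintro ⟨⟨u, v⟩, h⟩
  have hγv : γ + algebraMap F E v = 0 := by simpa using h
  exact hγ ⟨-v, by rw [map_neg, neg_eq_iff_add_eq_zero, add_comm, hγv]⟩

theorem affineOrbit_parametrization_injective (hγ : γ ∉ Set.range (algebraMap F E)) :
    Function.Injective fun p : Fˣ × F => algebraMap F E p.1 * (γ + algebraMap F E p.2) := by
  rintro ⟨u, v⟩ ⟨u', v'⟩ h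
  dsimp only at h
  obtain rfl : u = u' := by
    by_contra hne
    have hne' : (u : F) - u' ≠ 0 := sub_ne_zero.mpr (Units.val_injective.ne hne)
    refine hγ ⟨(u' * v' - u * v) / (u - u'), ?_⟩
    rw [map_div₀, div_eq_iff ((map_ne_zero _).mpr hne'), map_sub, map_sub, map_mul, map_mul]
    linear_combination -h
  have hv := add_left_cancel (mul_left_cancel₀ ((map_ne_zero _).mpr u.ne_zero) h)
  rw [(algebraMap F E).injective hv]

theorem ncard_affineOrbit (hγ : γ ∉ Set.range (algebraMap F E)) :
    (affineOrbit F γ).ncard = Nat.card F * (Nat.card F - 1) := by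
  rw [affineOrbit, Set.ncard_range_of_injective (affineOrbit_parametrization_injective hγ), Nat.card_prod,
    Nat.card_units, mul_comm]

theorem natDegree_minpoly_eq_finrank [FiniteDimensional F E]
    (hγ : Algebra.adjoin F {γ} = ⊤) : (minpoly F γ).natDegree = Module.finrank F E :=
  (PowerBasis.ofAdjoinEqTop (.of_finite F γ) hγ).finrank.symm

theorem eq_zero_of_quadratic_eq_zero (hγ : 3 ≤ (minpoly F γ).natDegree) {a b c : F}
    (h : algebraMap F E a * γ ^ 2 + algebraMap F E b * γ + algebraMap F E c = 0) :
    a = 0 ∧ b = 0 ∧ c = 0 := by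
  have hli := (linearIndependent_pow γ).comp (Fin.castLE hγ) (Fin.castLE_injective hγ)
  have hcoeff := Fintype.linearIndependent_iff.mp hli ![c, b, a] (by
    simp only [Fin.sum_univ_three, Function.comp_apply, Algebra.smul_def, Fin.val_castLE,
      Matrix.cons_val_zero, Matrix.cons_val_one, Matrix.cons_val, Fin.isValue,
      Fin.coe_ofNat_eq_mod, Nat.zero_mod, Nat.one_mod, Nat.mod_succ, pow_zero, pow_one, mul_one]
    linear_combination h)
  exact ⟨hcoeff 2, hcoeff 1, hcoeff 0⟩

theorem notMem_range_algebraMap (hγ : 3 ≤ (minpoly F γ).natDegree) :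
    γ ∉ Set.range (algebraMap F E) := by
  intro hrange
  have := minpoly.natDegree_eq_one_iff.mpr hrange
  omega

theorem disjoint_affineOrbit_inv (hγ : 3 ≤ (minpoly F γ).natDegree) :
    Disjoint (affineOrbit F γ) (affineOrbit F γ)⁻¹ := by
  rw [Set.disjoint_left]
  rintro x hx ⟨⟨u', v'⟩, h⟩
  have hne : x ≠ 0 := ne_of_mem_of_not_mem hx (zero_notMem_affineOrbit (notMem_range_algebraMap hγ))
  obtain ⟨⟨u, v⟩, rfl⟩ := hx
  dsimp only at h hne
  have hprod := mul_inv_cancel₀ hne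
  rw [← h] at hprod
  have huu' := eq_zero_of_quadratic_eq_zero hγ (a := u * u') (b := u * u' * (v + v'))
    (c := u * u' * v * v' - 1) (by
      simp only [map_mul, map_add, map_sub, map_one]
      linear_combination hprod)
  exact mul_ne_zero u.ne_zero u'.ne_zero huu'.1

end AffineOrbit

theorem U1_Uneg1_disjoint_card_general
    (q : ℕ) (F E : Type*) [Field F] [Field E] [Algebra F E]
    [Fintype F]
    (hq : Fintype.card F = q)
    (hdeg : Module.finrank F E = 3)
    (γ : E) (hγ : Algebra.adjoin F {γ} = ⊤) :
    Disjoint {x : E | ∃ u v : F, u ≠ 0 ∧ x = algebraMap F E u * (γ + algebraMap F E v)}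
             {x : E | ∃ u v : F, u ≠ 0 ∧ x = (algebraMap F E u * (γ + algebraMap F E v))⁻¹} ∧
    Set.ncard {x : E | ∃ u v : F, u ≠ 0 ∧ x = algebraMap F E u * (γ + algebraMap F E v)}
      = q * (q - 1) ∧
    Set.ncard {x : E | ∃ u v : F, u ≠ 0 ∧ x = (algebraMap F E u * (γ + algebraMap F E v))⁻¹}
      = q * (q - 1) := by
  have : FiniteDimensional F E := Module.finite_of_finrank_eq_succ hdeg
  have hγ₃ : 3 ≤ (minpoly F γ).natDegree := (natDegree_minpoly_eq_finrank hγ).trans hdeg |>.ge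
  simp only [← mem_affineOrbit, ← mem_inv_affineOrbit, Set.ofPred_mem_eq]
  rw [Set.ncard_inv, ncard_affineOrbit (notMem_range_algebraMap hγ₃), Nat.card_eq_fintype_card, hq]
  exact ⟨disjoint_affineOrbit_inv hγ₃, rfl, rfl⟩

/-- With `γ` generating the cubic extension `E` of `F` (`|F| = q`), the sets
`U₁ = { u(γ+v) : u ∈ Fˣ, v ∈ F }` and `U₋₁ = { (u(γ+v))⁻¹ }` are disjoint and
each has cardinality `q(q-1)`. -/
theorem U1_Uneg1_disjoint_card
    (q : ℕ) (F E : Type*) [Field F] [Field E] [Algebra F E]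
    [Fintype F] [Fintype E]
    (hq : Fintype.card F = q)
    (hdeg : Module.finrank F E = 3)
    (γ : E) (hγ : Algebra.adjoin F {γ} = ⊤) :
    Disjoint {x : E | ∃ u v : F, u ≠ 0 ∧ x = algebraMap F E u * (γ + algebraMap F E v)}
             {x : E | ∃ u v : F, u ≠ 0 ∧ x = (algebraMap F E u * (γ + algebraMap F E v))⁻¹} ∧
    Set.ncard {x : E | ∃ u v : F, u ≠ 0 ∧ x = algebraMap F E u * (γ + algebraMap F E v)}
      = q * (q - 1) ∧
    Set.ncard {x : E | ∃ u v : F, u ≠ 0 ∧ x = (algebraMap F E u * (γ + algebraMap F E v))⁻¹}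
      = q * (q - 1) :=
  U1_Uneg1_disjoint_card_general q F E hq hdeg γ hγ
end

section
/- Let q be a prime power, γ a generator of F_{q^3} over F_q, and χ a nontrivial multiplicative character of F_{q^3} whose order divides q^2+q+1. Set S = Σ_{a ∈ F_q} χ(γ + a). Then |S|² = q - 1 - S - conj(S). -/
/-!
Let `V = span_F {1, γ}`, a plane in the 3-dimensional `F`-space `E`, and `T = ∑_{x ∈ V} χ x`.
Since `χ` is trivial on `Fˣ`, grouping `V ∖ 0` into `F`-lines gives `T = (q - 1) (1 + S)`.
On the other hand `|T|² = ∑_z χ z · #(V ∩ z⁻¹ V)`, and `V ∩ z⁻¹ V` is `V` for `z ∈ F` but a line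
for `z ∉ F`, because `z` cannot stabilise `V`. With `∑_z χ z = 0` this gives `|T|² = q (q - 1)²`,
that is `|1 + S|² = q`, which is the claim.
-/

open Finset Module

namespace MulChar

variable {K L R : Type*} [Field K] [Field L] [Algebra K L] [CommRing R]

/-- Every element of `Kˣ` is a norm from `L`, and the norm is the `(|L| - 1) / (|K| - 1)`-th
power map. -/
theorem apply_algebraMap_eq_one [Finite L] {χ : MulChar L R}
    (hχ : χ ^ ((Nat.card L - 1) / (Nat.card K - 1)) = 1) {c : K} (hc : c ≠ 0) :
    χ (algebraMap K L c) = 1 := by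
  have : Finite K := Finite.of_injective _ (algebraMap K L).injective
  have hn : (Nat.card L - 1) / (Nat.card K - 1) ≠ 0 :=
    (Nat.div_pos (Nat.sub_le_sub_right
      (Nat.card_le_card_of_injective _ (algebraMap K L).injective) 1)
      (Nat.sub_pos_of_lt Finite.one_lt_card)).ne'
  obtain ⟨w, rfl⟩ := FiniteField.norm_surjective K L c
  have hw : IsUnit w := by simpa [Algebra.norm_eq_zero_iff] using hc
  rw [FiniteField.algebraMap_norm_eq_pow, map_pow, ← pow_apply' χ hn, hχ, one_apply hw]

theorem sum_algebraMap [Fintype K] [Nontrivial R] {χ : MulChar L R}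
    (hχ : ∀ c : K, c ≠ 0 → χ (algebraMap K L c) = 1) :
    ∑ c : K, χ (algebraMap K L c) = Fintype.card K - 1 := by
  classical
  rw [← add_sum_erase _ _ (mem_univ 0), map_zero, MulChar.map_zero, zero_add,
    sum_congr rfl fun c hc ↦ hχ c (ne_of_mem_erase hc), sum_const, card_erase_of_mem (mem_univ 0),
    card_univ, nsmul_one, Nat.cast_pred Fintype.card_pos]

theorem starRingEnd_apply [Finite L] (χ : MulChar L ℂ) (x : L) :
    starRingEnd ℂ (χ x) = χ x⁻¹ := by
  rw [← inv_apply', ← star_apply']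
  rfl

end MulChar

theorem Submodule.finrank_inf_eq_one_of_ne {K V : Type*} [DivisionRing K] [AddCommGroup V]
    [Module K V] [FiniteDimensional K V] (hV : finrank K V = 3) {P Q : Submodule K V}
    (hP : finrank K P = 2) (hQ : finrank K Q = 2) (hPQ : P ≠ Q) : finrank K ↥(P ⊓ Q) = 1 := by
  have hlt : P < P ⊔ Q := by
    refine lt_of_le_of_ne le_sup_left fun h ↦ hPQ ?_
    exact (eq_of_le_of_finrank_eq (h ▸ le_sup_right) (hQ.trans hP.symm)).symm
  have := finrank_lt_finrank_of_lt hlt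
  have := (P ⊔ Q).finrank_le
  have := finrank_sup_add_finrank_inf_eq P Q
  omega

section Plane

variable {F E : Type*} [Field F] [Field E] [Algebra F E]

theorem finrank_inf_comap_mulLeft_of_mem_range (V : Submodule F E) {z : E}
    (hz : z ∈ Set.range (algebraMap F E)) :
    finrank F ↥(V ⊓ V.comap (LinearMap.mulLeft F z)) = finrank F V := by
  obtain ⟨c, rfl⟩ := hz
  rw [inf_eq_left.mpr fun y hy ↦ by simpa [← Algebra.smul_def] using V.smul_mem c hy]

theorem finrank_inf_comap_mulLeft_of_notMem_range [FiniteDimensional F E]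
    (h3 : finrank F E = 3) {V : Submodule F E} (hV : finrank F V = 2)
    (hstab : ∀ z, (∀ y ∈ V, z * y ∈ V) → z ∈ Set.range (algebraMap F E)) {z : E}
    (hz : z ∉ Set.range (algebraMap F E)) :
    finrank F ↥(V ⊓ V.comap (LinearMap.mulLeft F z)) = 1 := by
  have hz0 : z ≠ 0 := by rintro rfl; exact hz ⟨0, map_zero _⟩
  refine Submodule.finrank_inf_eq_one_of_ne h3 hV ?_ fun h ↦ hz (hstab z fun y hy ↦ ?_)
  · change finrank F (V.comap ((Units.mk0 z hz0).mulLeftLinearEquiv F E : E →ₗ[F] E)) = 2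
    rw [Submodule.comap_equiv_eq_map_symm, LinearEquiv.finrank_map_eq, hV]
  · exact (h ▸ hy : y ∈ V.comap (LinearMap.mulLeft F z))

variable [Fintype F] [Fintype E] (V : Submodule F E) [DecidablePred (· ∈ V)]

theorem card_filter_mul_mem_eq_pow_finrank (z : E) :
    #{y | y ∈ V ∧ z * y ∈ V} =
      Fintype.card F ^ finrank F ↥(V ⊓ V.comap (LinearMap.mulLeft F z)) := by
  rw [← Nat.card_eq_fintype_card, ← Module.natCard_eq_pow_finrank, ← Fintype.card_subtype,
    ← Nat.card_eq_fintype_card]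
  rfl

omit [Fintype F] in
/-- The `y = 0` term on the right is `∑ z, χ z = 0`, matching `χ (x * 0⁻¹) = 0` on the left. -/
theorem sum_mulChar_mul_conj_eq_sum_card {χ : MulChar E ℂ} (hχ : χ ≠ 1) :
    (∑ x with x ∈ V, χ x) * starRingEnd ℂ (∑ x with x ∈ V, χ x) =
      ∑ z, χ z * #{y | y ∈ V ∧ z * y ∈ V} := by
  have hy : ∀ y, ∑ x with x ∈ V, χ (x * y⁻¹) = ∑ z, if z * y ∈ V then χ z else 0 := by
    intro y
    rcases eq_or_ne y 0 with rfl | hy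
    · simp [V.zero_mem, MulChar.map_zero, MulChar.sum_eq_zero_of_ne_one hχ]
    · rw [sum_filter]
      exact (Fintype.sum_equiv (Equiv.mulRight₀ y hy) _ _ fun z ↦ by simp [hy]).symm
  calc _ = ∑ y with y ∈ V, ∑ x with x ∈ V, χ (x * y⁻¹) := by
        simp_rw [map_sum, MulChar.starRingEnd_apply, sum_mul_sum, ← map_mul]
        exact sum_comm
    _ = _ := by
        simp_rw [hy]
        rw [sum_comm]
        simp [← sum_filter, filter_filter, mul_comm]

/-- Two distinct planes `V` and `z⁻¹ V` meet in a line, so the count in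
`sum_mulChar_mul_conj_eq_sum_card` is `q` off `F` and `q²` on `F`. -/
theorem sum_mulChar_mul_conj_of_finrank_eq_two (h3 : finrank F E = 3) (hV : finrank F V = 2)
    (hstab : ∀ z, (∀ y ∈ V, z * y ∈ V) → z ∈ Set.range (algebraMap F E))
    {χ : MulChar E ℂ} (hχ : χ ≠ 1) (htriv : ∀ c : F, c ≠ 0 → χ (algebraMap F E c) = 1) :
    (∑ x with x ∈ V, χ x) * starRingEnd ℂ (∑ x with x ∈ V, χ x) =
      (Fintype.card F : ℂ) * (Fintype.card F - 1) ^ 2 := by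
  classical
  have : FiniteDimensional F E := .of_finrank_eq_succ h3
  set q : ℂ := (Fintype.card F : ℂ)
  have hcount : ∀ z, (#{y | y ∈ V ∧ z * y ∈ V} : ℂ) =
      q + if z ∈ Set.range (algebraMap F E) then q ^ 2 - q else 0 := by
    intro z
    rw [card_filter_mul_mem_eq_pow_finrank]
    split_ifs with hz
    · rw [finrank_inf_comap_mulLeft_of_mem_range V hz, hV]
      push_cast
      ring
    · rw [finrank_inf_comap_mulLeft_of_notMem_range h3 hV hstab hz]
      simp [q]
  rw [sum_mulChar_mul_conj_eq_sum_card V hχ]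
  simp_rw [hcount, mul_add, sum_add_distrib, ← sum_mul, MulChar.sum_eq_zero_of_ne_one hχ,
    zero_mul, zero_add]
  rw [← Fintype.sum_of_injective (algebraMap F E) (algebraMap F E).injective
    (fun c ↦ χ (algebraMap F E c) * (q ^ 2 - q)) _ (fun z hz ↦ by simp [hz]) (fun c ↦ by simp),
    ← sum_mul, MulChar.sum_algebraMap htriv]
  ring

end Plane

section Generator

variable {F E : Type*} [Field F] [Field E] [Algebra F E]

theorem mul_mem_of_adjoin_eq_top {γ : E} (hγ : Algebra.adjoin F {γ} = ⊤) {V : Submodule F E}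
    (hV : ∀ y ∈ V, γ * y ∈ V) (w : E) {y : E} (hy : y ∈ V) : w * y ∈ V := by
  have hw : w ∈ Algebra.adjoin F {γ} := hγ ▸ Algebra.mem_top
  induction hw using Algebra.adjoin_induction generalizing y with
  | mem x hx => exact (Set.mem_singleton_iff.mp hx) ▸ hV y hy
  | algebraMap c => simpa [← Algebra.smul_def] using V.smul_mem c hy
  | add w₁ w₂ _ _ h₁ h₂ => simpa [add_mul] using add_mem (h₁ hy) (h₂ hy)
  | mul w₁ w₂ _ _ h₁ h₂ => simpa [mul_assoc] using h₁ (h₂ hy)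

theorem notMem_range_algebraMap_of_adjoin_eq_top [Module.Free F E] {γ : E}
    (hγ : Algebra.adjoin F {γ} = ⊤) (hE : finrank F E ≠ 1) : γ ∉ Set.range (algebraMap F E) := by
  rintro ⟨c, rfl⟩
  rw [Algebra.adjoin_singleton_algebraMap] at hγ
  exact hE (Subalgebra.bot_eq_top_iff_finrank_eq_one.mp hγ)

theorem linearIndependent_one_pair_of_notMem_range {γ : E} (hγ : γ ∉ Set.range (algebraMap F E)) :
    LinearIndependent F ![1, γ] := by
  refine LinearIndependent.pair_iff.mpr fun s t hst ↦ ?_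
  obtain rfl : t = 0 := by
    by_contra ht
    refine hγ ⟨-(s / t), ?_⟩
    have ht' : algebraMap F E t ≠ 0 := by simpa using ht
    rw [Algebra.smul_def, Algebra.smul_def, mul_one] at hst
    rw [map_neg, map_div₀]
    field_simp
    linear_combination -hst
  simpa using hst

theorem finrank_span_one_pair {γ : E} (hγ : γ ∉ Set.range (algebraMap F E)) :
    finrank F (Submodule.span F {1, γ}) = 2 := by
  have := finrank_span_eq_card (linearIndependent_one_pair_of_notMem_range hγ)
  rwa [Matrix.range_cons_cons_empty, Fintype.card_fin] at this

/-- If `z = a + b γ` with `b ≠ 0` stabilises `V = span {1, γ}`, then so does `γ`, hence all of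
`F[γ] = E`, forcing `V = E`. -/
theorem mem_range_algebraMap_of_forall_mul_mem [FiniteDimensional F E] {γ : E}
    (hγ : Algebra.adjoin F {γ} = ⊤) (hE : 2 < finrank F E) {z : E}
    (hz : ∀ y ∈ Submodule.span F {1, γ}, z * y ∈ Submodule.span F {1, γ}) :
    z ∈ Set.range (algebraMap F E) := by
  obtain ⟨a, b, rfl⟩ :=
    Submodule.mem_span_pair.mp (mul_one z ▸ hz 1 (Submodule.subset_span (by simp)))
  by_contra hab
  have hb : b ≠ 0 := by
    rintro rfl
    exact hab ⟨a, by simp [Algebra.smul_def]⟩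
  have hγV : ∀ y ∈ Submodule.span F {1, γ}, γ * y ∈ Submodule.span F {1, γ} := fun y hy ↦ by
    have h := Submodule.smul_mem _ b⁻¹ (sub_mem (hz y hy) (Submodule.smul_mem _ a hy))
    rwa [add_mul, smul_mul_assoc, smul_mul_assoc, one_mul, add_sub_cancel_left, smul_smul,
      inv_mul_cancel₀ hb, one_smul] at h
  refine hE.not_ge ?_
  rw [← finrank_top, ← (eq_top_iff.mpr fun w _ ↦ ?_ : Submodule.span F {1, γ} = ⊤)]
  · classical
    exact (finrank_span_le_card _).trans (by simpa using card_insert_le (1 : E) {γ})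
  · simpa using mul_mem_of_adjoin_eq_top hγ hγV w (Submodule.subset_span (by simp) : (1 : E) ∈ _)

/-- The points of `span {1, γ}` are `s + t γ`, and `χ (s + t γ) = χ (γ + s / t)` for `t ≠ 0`. -/
theorem sum_mulChar_span_one_pair [Fintype F] [Fintype E] {γ : E}
    [DecidablePred (· ∈ Submodule.span F {1, γ})] (hγ : γ ∉ Set.range (algebraMap F E))
    {χ : MulChar E ℂ} (hχ : ∀ c : F, c ≠ 0 → χ (algebraMap F E c) = 1) :
    ∑ x with x ∈ Submodule.span F {1, γ}, χ x =
      (Fintype.card F - 1) * (1 + ∑ a : F, χ (γ + algebraMap F E a)) := by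
  have hli : LinearIndependent F ![1, γ] := linearIndependent_one_pair_of_notMem_range hγ
  have hline : ∀ t : F, t ≠ 0 →
      ∑ s : F, χ (s • 1 + t • γ) = ∑ a : F, χ (γ + algebraMap F E a) := fun t ht ↦ by
    refine Fintype.sum_equiv (Equiv.mulRight₀ t⁻¹ (inv_ne_zero ht)) _ _ fun s ↦ ?_
    have hfactor : s • (1 : E) + t • γ = algebraMap F E t * (γ + algebraMap F E (s * t⁻¹)) := by
      have ht' : algebraMap F E t ≠ 0 := by simpa using ht
      simp only [Algebra.smul_def, mul_one, map_mul, map_inv₀]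
      field_simp
      ring
    rw [hfactor, map_mul, hχ t ht, one_mul]
    rfl
  calc ∑ x with x ∈ Submodule.span F {1, γ}, χ x
      = ∑ p : F × F, χ (p.1 • 1 + p.2 • γ) := by
        rw [sum_filter]
        refine (Fintype.sum_of_injective (fun p : F × F ↦ p.1 • 1 + p.2 • γ) ?_ _ _
          (fun x hx ↦ ?_) fun p ↦ ?_).symm
        · intro p p' h
          have h' : (p.1 - p'.1) • (1 : E) + (p.2 - p'.2) • γ = 0 := by
            simp only at h
            rw [sub_smul, sub_smul, sub_add_sub_comm, h, sub_self]
          obtain ⟨h₁, h₂⟩ := LinearIndependent.pair_iff.mp hli _ _ h'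
          exact Prod.ext (sub_eq_zero.mp h₁) (sub_eq_zero.mp h₂)
        · refine if_neg fun hmem ↦ hx ?_
          obtain ⟨a, b, h⟩ := Submodule.mem_span_pair.mp hmem
          exact ⟨(a, b), h⟩
        · simp [Submodule.mem_span_pair]
    _ = ∑ t : F, ∑ s : F, χ (s • 1 + t • γ) := Fintype.sum_prod_type_right _
    _ = _ := by
        classical
        rw [← add_sum_erase _ _ (mem_univ 0),
          sum_congr rfl fun t ht ↦ hline t (ne_of_mem_erase ht)]
        simp only [zero_smul, add_zero]
        simp only [Algebra.smul_def, mul_one]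
        rw [MulChar.sum_algebraMap hχ, sum_const, card_erase_of_mem (mem_univ 0), card_univ,
          nsmul_eq_mul, Nat.cast_pred Fintype.card_pos]
        ring

end Generator

open Finset in
/-- For `γ` generating the cubic extension `E` of `F` (`|F| = q`) and `χ` a
nontrivial multiplicative character of `E` whose order divides `q² + q + 1`,
the sum `S = Σ_{a ∈ F} χ(γ + a)` satisfies `|S|² = q - 1 - S - conj S`. -/
theorem S_norm_sq_identity
    (q : ℕ) (F E : Type*) [Field F] [Field E] [Algebra F E]
    [Fintype F] [Fintype E]
    (hq : Fintype.card F = q)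
    (hdeg : Module.finrank F E = 3)
    (γ : E) (hγ : Algebra.adjoin F {γ} = ⊤)
    (χ : MulChar E ℂ) (hχ₁ : χ ≠ 1) (hχ : χ ^ (q ^ 2 + q + 1) = 1) :
    (∑ a : F, χ (γ + algebraMap F E a)) *
        (starRingEnd ℂ) (∑ a : F, χ (γ + algebraMap F E a))
      = (q : ℂ) - 1 - (∑ a : F, χ (γ + algebraMap F E a))
          - (starRingEnd ℂ) (∑ a : F, χ (γ + algebraMap F E a)) := by
  classical
  subst hq
  have : FiniteDimensional F E := .of_finrank_eq_succ hdeg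
  have hq1 : 1 ≤ Fintype.card F := Fintype.card_pos
  have hexp : (Nat.card E - 1) / (Nat.card F - 1) = Fintype.card F ^ 2 + Fintype.card F + 1 := by
    rw [Module.natCard_eq_pow_finrank (K := F), hdeg, Nat.card_eq_fintype_card]
    refine Nat.div_eq_of_eq_mul_left (by have := Fintype.one_lt_card (α := F); omega) ?_
    zify [hq1, Nat.one_le_pow 3 _ hq1]
    ring
  have htriv (c : F) (hc : c ≠ 0) : χ (algebraMap F E c) = 1 :=
    MulChar.apply_algebraMap_eq_one (hexp ▸ hχ) hc
  have hγF := notMem_range_algebraMap_of_adjoin_eq_top hγ (by omega)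
  have key := sum_mulChar_mul_conj_of_finrank_eq_two _ hdeg (finrank_span_one_pair hγF)
    (fun z ↦ mem_range_algebraMap_of_forall_mul_mem hγ (by omega)) hχ₁ htriv
  rw [sum_mulChar_span_one_pair hγF htriv] at key
  have hq0 : (Fintype.card F : ℂ) - 1 ≠ 0 := by
    rw [sub_ne_zero, Ne, Nat.cast_eq_one]
    exact Fintype.one_lt_card.ne'
  set S := ∑ a : F, χ (γ + algebraMap F E a)
  have hS : (1 + S) * (1 + starRingEnd ℂ S) = Fintype.card F := by
    refine mul_left_cancel₀ (pow_ne_zero 2 hq0) ?_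
    simp only [map_mul, map_sub, map_add, map_natCast, map_one] at key
    linear_combination key
  linear_combination hS
end

section
/- For q = 5, there exist a nonzero β ∈ F_{5^3} and a generator γ of F_{5^3} over F_5 such that β(γ + a) is not a primitive element (i.e., not a generator of the cyclic group F_{5^3}*) for any a ∈ F_5. -/
/-!
Take `γ` a root of the irreducible cubic `X³ + X + 1` over `F₅`, so `γ` generates `F₁₂₅`, and
`β = γ² + γ + 2`. Modulo `γ³ + γ + 1`, the products `β(γ + a)` for `a = 0, 1, 2, 3` are squares,
and `β(γ + 4) = 2 ∈ F₅`. Neither kind of element is primitive: since `124` is even, a square `w²`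
satisfies `(w²)^62 = 1`, and an element of `F₅` has order at most `5`.
-/

open Polynomial

instance : Fact (Nat.Prime 5) := ⟨by norm_num⟩

theorem exists_root_adjoin_eq_top_of_natDegree_eq_finrank {K L : Type*} [Field K] [Field L]
    [Algebra K L] [Finite L] {f : K[X]} (hf : Irreducible f)
    (hdeg : f.natDegree = Module.finrank K L) :
    ∃ γ : L, aeval γ f = 0 ∧ Algebra.adjoin K {γ} = ⊤ := by
  have := Fact.mk hf
  have hrank : Module.finrank K (AdjoinRoot f) = Module.finrank K L :=
    finrank_quotient_span_eq_natDegree.trans hdeg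
  have := (AdjoinRoot.powerBasis hf.ne_zero).finite
  have : Module.Finite K L := Module.finite_of_finrank_pos (hdeg ▸ hf.natDegree_pos)
  obtain ⟨φ⟩ := FiniteField.nonempty_algHom_of_finrank_dvd hrank.dvd
  have hφ : Function.Surjective φ :=
    (LinearMap.injective_iff_surjective_of_finrank_eq_finrank hrank (f := φ.toLinearMap)).mp
      φ.injective
  refine ⟨φ (AdjoinRoot.root f), AdjoinRoot.aeval_algHom_eq_zero f φ, ?_⟩
  rw [← Set.image_singleton, Algebra.adjoin_image, AdjoinRoot.adjoinRoot_eq_top,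
    Algebra.map_top, φ.range_eq_top.mpr hφ]

theorem FiniteField.orderOf_ne_natCard_sub_one_of_isSquare {F : Type*} [Field F] [Finite F]
    (hF : ringChar F ≠ 2) {z : F} (hz : IsSquare z) : orderOf z ≠ Nat.card F - 1 := by
  have := Fintype.ofFinite F
  obtain ⟨w, rfl⟩ := hz
  rw [Nat.card_eq_fintype_card]
  intro hord
  have hpos : 0 < Fintype.card F - 1 := by have := Fintype.one_lt_card (α := F); omega
  have hw : w ≠ 0 := by rintro rfl; simp at hord; omega
  have hhalf := Nat.two_mul_odd_div_two (FiniteField.odd_card_of_char_ne_two hF)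
  have hpow : (w * w) ^ (Fintype.card F / 2) = 1 := by
    rw [← sq, ← pow_mul, hhalf, FiniteField.pow_card_sub_one_eq_one w hw]
  have := Nat.le_of_dvd (by omega) (hord ▸ orderOf_dvd_of_pow_eq_one hpow)
  omega

theorem orderOf_algebraMap_le_natCard {K L : Type*} [Field K] [Finite K] [Ring L] [Nontrivial L]
    [Algebra K L] (a : K) : orderOf (algebraMap K L a) ≤ Nat.card K :=
  (orderOf_injective (algebraMap K L).toMonoidHom (algebraMap K L).injective a).le.trans
    orderOf_le_card

theorem irreducible_X_pow_three_add_X_add_one_zmod_five :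
    Irreducible (X ^ 3 + X + 1 : (ZMod 5)[X]) := by
  have hmonic : (X ^ 3 + X + 1 : (ZMod 5)[X]).Monic := by monicity!
  have hdeg : (X ^ 3 + X + 1 : (ZMod 5)[X]).natDegree = 3 := by compute_degree!
  refine (hmonic.irreducible_iff_roots_eq_zero_of_degree_le_three (by omega) (by omega)).mpr ?_
  refine Multiset.eq_zero_of_forall_notMem fun x hx => ?_
  have hroot : x ^ 3 + x + 1 = 0 := by simpa using (mem_roots hmonic.ne_zero).mp hx
  exact (by decide : ∀ y : ZMod 5, y ^ 3 + y + 1 ≠ 0) x hroot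

section CubicOverZMod5

variable {R : Type*} [CommRing R] [Algebra (ZMod 5) R] {γ : R}

variable (R) in
theorem ofNat_five_eq_zero_of_zmod_five_algebra : (5 : R) = 0 := by
  rw [← map_ofNat (algebraMap (ZMod 5) R) 5, show (5 : ZMod 5) = 0 from rfl, map_zero]

theorem sq_add_add_two_ne_zero_of_cubic [Nontrivial R] (hγ : γ ^ 3 + γ + 1 = 0) :
    γ ^ 2 + γ + 2 ≠ 0 := by
  intro hβ
  apply one_ne_zero (α := R)
  linear_combination 2 * hγ - 2 * (γ - 1) * hβ - ofNat_five_eq_zero_of_zmod_five_algebra R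

theorem isSquare_mul_add_algebraMap_of_cubic (hγ : γ ^ 3 + γ + 1 = 0) {a : ZMod 5} (ha : a ≠ 4) :
    IsSquare ((γ ^ 2 + γ + 2) * (γ + algebraMap (ZMod 5) R a)) := by
  have h5 := ofNat_five_eq_zero_of_zmod_five_algebra R
  obtain rfl | rfl | rfl | rfl : a = 0 ∨ a = 1 ∨ a = 2 ∨ a = 3 := by revert a; decide
  · refine ⟨2 + 4 * γ, ?_⟩
    rw [map_zero]
    linear_combination hγ - (1 + 3 * γ + 3 * γ ^ 2) * h5
  · refine ⟨γ + 2 * γ ^ 2, ?_⟩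
    rw [map_one]
    linear_combination -(3 + 4 * γ) * hγ + (1 + 2 * γ + γ ^ 2) * h5
  · refine ⟨1 + γ + 4 * γ ^ 2, ?_⟩
    rw [map_ofNat]
    linear_combination -(7 + 16 * γ) * hγ + (2 + 5 * γ + 2 * γ ^ 2) * h5
  · refine ⟨γ ^ 2, ?_⟩
    rw [map_ofNat]
    linear_combination (1 - γ) * hγ + (1 + γ + γ ^ 2) * h5

theorem mul_add_algebraMap_four_of_cubic (hγ : γ ^ 3 + γ + 1 = 0) :
    (γ ^ 2 + γ + 2) * (γ + algebraMap (ZMod 5) R 4) = algebraMap (ZMod 5) R 2 := by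
  simp only [map_ofNat]
  linear_combination hγ + (1 + γ + γ ^ 2) * ofNat_five_eq_zero_of_zmod_five_algebra R

end CubicOverZMod5

/-- `q = 5` is not in `L₃`: there exist a nonzero `β ∈ F_{125}` and a generator
`γ` of `F_{125}` over `F₅` such that `β(γ + a)` is not a primitive element
(a generator of the cyclic group `F_{125}ˣ`, of order 124) for any `a ∈ F₅`. -/
theorem five_not_in_L3 :
    ∃ β γ : GaloisField 5 3, β ≠ 0 ∧
      Algebra.adjoin (ZMod 5) {γ} = ⊤ ∧
      ∀ a : ZMod 5,
        orderOf (β * (γ + algebraMap (ZMod 5) (GaloisField 5 3) a)) ≠ 124 := by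
  obtain ⟨γ, hγ, htop⟩ := exists_root_adjoin_eq_top_of_natDegree_eq_finrank (L := GaloisField 5 3)
    irreducible_X_pow_three_add_X_add_one_zmod_five
    (by rw [GaloisField.finrank 5 three_ne_zero]; compute_degree!)
  replace hγ : γ ^ 3 + γ + 1 = 0 := by simpa using hγ
  refine ⟨γ ^ 2 + γ + 2, γ, sq_add_add_two_ne_zero_of_cubic hγ, htop, fun a => ?_⟩
  by_cases ha : a = 4
  · have hle := orderOf_algebraMap_le_natCard (L := GaloisField 5 3) (2 : ZMod 5)
    rw [Nat.card_zmod] at hle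
    rw [ha, mul_add_algebraMap_four_of_cubic hγ]
    omega
  · have hchar : ringChar (GaloisField 5 3) ≠ 2 := by rw [ringChar.eq (GaloisField 5 3) 5]; norm_num
    have hcard : Nat.card (GaloisField 5 3) - 1 = 124 := by
      rw [GaloisField.card 5 3 three_ne_zero]; rfl
    exact hcard ▸ FiniteField.orderOf_ne_natCard_sub_one_of_isSquare hchar
      (isSquare_mul_add_algebraMap_of_cubic hγ ha)
end
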